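/- For every integer n ≥ 2, let 𝒯_n = (T_n, λ) be the temporal digraph where T_n is the transitive tournament on vertices u_1, …, u_n (with an arc u_i→u_j whenever i < j) and λ(u_i→u_j) = {n − j + 1} for all i < j. Then 𝒯_n is a temporal DAG, the maximum size of a temporal antichain of 𝒯_n is 1, and the minimum cardinality of a temporal path cover of 𝒯_n, as well as the minimum cardinality of a temporally disjoint path cover of 𝒯_n, is ⌈n/2⌉. In particular, temporal DAGs do not satisfy the Dilworth property nor the TD-Dilworth property, and the ratio between the minimum cover size and the maximum temporal antichain size can be arbitrarily large. -/

import Mathlib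

/-! A temporal digraph on vertex set `V` is encoded by its arc-labeling
`lab : V → V → Finset ℕ`: there is an arc `u → v` iff `lab u v` is nonempty,
and `lab u v` is the (finite) set of time-steps at which the arc `u → v` is active. -/

/-- A temporal (directed) path: vertices `verts 0, …, verts len`, pairwise distinct,
traversed at strictly increasing times `times 0 < … < times (len-1)`, each arc being
active at the time it is traversed. A single vertex (`len = 0`) is a temporal path. -/
structure TPath {V : Type*} (lab : V → V → Finset ℕ) where
  len : ℕ
  verts : Fin (len + 1) → V
  times : Fin len → ℕ
  inj : Function.Injective verts
  mono : StrictMono times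
  mem_lab : ∀ i : Fin len, times i ∈ lab (verts i.castSucc) (verts i.succ)

/-- The set of vertices lying on a temporal path. -/
def TPath.vertexSet {V : Type*} {lab : V → V → Finset ℕ} (P : TPath lab) : Set V :=
  Set.range P.verts

/-- `P` is a temporal path from `u` to `v`. -/
def TPath.FromTo {V : Type*} {lab : V → V → Finset ℕ} (P : TPath lab) (u v : V) : Prop :=
  P.verts 0 = u ∧ P.verts (Fin.last P.len) = v

/-- Two vertices are temporally connected if some temporal path contains both of them. -/
def TempConnected {V : Type*} (lab : V → V → Finset ℕ) (u v : V) : Prop :=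
  ∃ P : TPath lab, u ∈ P.vertexSet ∧ v ∈ P.vertexSet

/-- A temporal antichain: a set of pairwise not temporally connected vertices. -/
def IsTempAntichain {V : Type*} (lab : V → V → Finset ℕ) (S : Set V) : Prop :=
  S.Pairwise fun u v => ¬ TempConnected lab u v

/-- A family of temporal paths is a temporal path cover if every vertex lies on some path. -/
def IsTPC {V : Type*} (lab : V → V → Finset ℕ) {m : ℕ} (C : Fin m → TPath lab) : Prop :=
  ∀ v : V, ∃ i, v ∈ (C i).vertexSet

/-- Two temporal paths are temporally disjoint if any two of their arcs sharing an
end-vertex are traversed at distinct time-steps. -/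
def TDisjoint {V : Type*} {lab : V → V → Finset ℕ} (P Q : TPath lab) : Prop :=
  ∀ i : Fin P.len, ∀ j : Fin Q.len,
    (P.verts i.castSucc = Q.verts j.castSucc ∨ P.verts i.castSucc = Q.verts j.succ ∨
     P.verts i.succ = Q.verts j.castSucc ∨ P.verts i.succ = Q.verts j.succ) →
    P.times i ≠ Q.times j

/-- The set of possible cardinalities of temporal path covers. -/
def tpcSizes {V : Type*} (lab : V → V → Finset ℕ) : Set ℕ :=
  {m | ∃ C : Fin m → TPath lab, IsTPC lab C}

/-- The set of possible cardinalities of temporally disjoint path covers. -/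
def tdpcSizes {V : Type*} (lab : V → V → Finset ℕ) : Set ℕ :=
  {m | ∃ C : Fin m → TPath lab, IsTPC lab C ∧ ∀ i j, i ≠ j → TDisjoint (C i) (C j)}

/-- The set of possible cardinalities of temporal antichains. -/
def antichainSizes {V : Type*} (lab : V → V → Finset ℕ) : Set ℕ :=
  {m | ∃ S : Finset V, S.card = m ∧ IsTempAntichain lab ↑S}

/-- The underlying undirected graph (forget orientations and labels). -/
def underlyingGraph {V : Type*} (lab : V → V → Finset ℕ) : SimpleGraph V where
  Adj u v := u ≠ v ∧ ((lab u v).Nonempty ∨ (lab v u).Nonempty)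
  symm := by constructor; intro u v h; exact ⟨h.1.symm, h.2.symm⟩
  loopless := by constructor; intro v h; exact h.1 rfl

/-- All time labels are positive integers. -/
def PositiveLabels {V : Type*} (lab : V → V → Finset ℕ) : Prop :=
  ∀ u v : V, ∀ t ∈ lab u v, 0 < t

/-- A temporal oriented tree: the underlying undirected graph is a tree and the digraph is
an orientation of it (no pair of opposite arcs, no loops). -/
def IsTemporalOrientedTree {V : Type*} (lab : V → V → Finset ℕ) : Prop :=
  (underlyingGraph lab).IsTree ∧ ∀ u v : V, (lab u v).Nonempty → lab v u = ∅

/-- The connectivity graph: two distinct vertices are adjacent iff temporally connected. -/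
def connGraph {V : Type*} (lab : V → V → Finset ℕ) : SimpleGraph V where
  Adj u v := u ≠ v ∧ TempConnected lab u v
  symm := by constructor; intro u v h; exact ⟨h.1.symm, h.2.imp fun P hP => ⟨hP.2, hP.1⟩⟩
  loopless := by constructor; intro v h; exact h.1 rfl

/-- `c` lists the vertices of an induced cycle of length `n` of `G`, in cyclic order:
the listed vertices are distinct and two of them are adjacent iff they are cyclically
consecutive. -/
def IsInducedCycle {V : Type*} (G : SimpleGraph V) (n : ℕ) (c : Fin n → V) : Prop :=
  Function.Injective c ∧
    ∀ i j : Fin n, G.Adj (c i) (c j) ↔ ((i.val + 1) % n = j.val ∨ (j.val + 1) % n = i.val)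

/-- A hole: an induced cycle of length at least 5. -/
def HasHole {V : Type*} (G : SimpleGraph V) : Prop :=
  ∃ n, 5 ≤ n ∧ ∃ c : Fin n → V, IsInducedCycle G n c

/-- An anti-hole: an induced subgraph whose complement is a cycle of length at least 5. -/
def HasAntihole {V : Type*} (G : SimpleGraph V) : Prop :=
  ∃ n, 5 ≤ n ∧ ∃ c : Fin n → V, IsInducedCycle Gᶜ n c

/-- A graph is weakly chordal if it has no hole and no anti-hole. -/
def WeaklyChordal {V : Type*} (G : SimpleGraph V) : Prop :=
  ¬ HasHole G ∧ ¬ HasAntihole G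

namespace TPath

variable {V : Type*} {lab : V → V → Finset ℕ}

def single (v : V) : TPath lab where
  len := 0
  verts := fun _ => v
  times := Fin.elim0
  inj := fun a b _ => Fin.ext (by omega)
  mono := fun a => a.elim0
  mem_lab := fun i => i.elim0

def arc {u v : V} {t : ℕ} (huv : u ≠ v) (ht : t ∈ lab u v) : TPath lab where
  len := 1
  verts := ![u, v]
  times := fun _ => t
  inj := by
    intro a b hab
    fin_cases a <;> fin_cases b <;> simp_all [eq_comm]
  mono := fun a b hab => absurd hab (by omega)
  mem_lab := fun i => by fin_cases i; simpa using ht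

lemma vertexSet_single (v : V) : (single v : TPath lab).vertexSet = {v} :=
  Set.range_const

lemma vertexSet_arc {u v : V} {t : ℕ} (huv : u ≠ v) (ht : t ∈ lab u v) :
    (arc huv ht).vertexSet = {u, v} := by
  ext x
  simp [vertexSet, arc, eq_comm, or_comm]

lemma card_image_verts_le (P : TPath lab) [DecidableEq V] :
    (Finset.univ.image P.verts).card ≤ P.len + 1 :=
  Finset.card_image_le.trans_eq (Finset.card_fin _)

lemma tDisjoint_of_disjoint {P Q : TPath lab} (h : Disjoint P.vertexSet Q.vertexSet) :
    TDisjoint P Q := by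
  intro i j hshared
  exfalso
  rcases hshared with he | he | he | he <;>
    exact Set.disjoint_left.mp h ⟨_, rfl⟩ ⟨_, he.symm⟩

end TPath

section General

variable {V : Type*} {lab : V → V → Finset ℕ}

lemma tempConnected_of_mem_lab {u v : V} {t : ℕ} (huv : u ≠ v) (ht : t ∈ lab u v) :
    TempConnected lab u v :=
  ⟨.arc huv ht, by simp [TPath.vertexSet_arc]⟩

lemma TempConnected.symm {u v : V} (h : TempConnected lab u v) : TempConnected lab v u :=
  h.imp fun _ hP => hP.symm

lemma not_transGen_self_of_arcs_lt [Preorder V] (harc : ∀ a b, (lab a b).Nonempty → a < b)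
    (v : V) : ¬ Relation.TransGen (fun a b => (lab a b).Nonempty) v v := fun hv => by
  have hlt := Relation.TransGen.mono harc _ _ hv
  rw [Relation.transGen_eq_self] at hlt
  exact lt_irrefl v hlt

lemma isGreatest_antichainSizes_one [Nonempty V]
    (hconn : ∀ u v : V, u ≠ v → TempConnected lab u v) :
    IsGreatest (antichainSizes lab) 1 := by
  refine ⟨⟨{Classical.arbitrary V}, Finset.card_singleton _, by simp [IsTempAntichain]⟩, ?_⟩
  rintro m ⟨S, rfl, hS⟩
  by_contra! hcard
  obtain ⟨a, ha, b, hb, hab⟩ := Finset.one_lt_card.mp hcard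
  exact hS ha hb hab (hconn a b hab)

lemma card_le_mul_of_isTPC [Fintype V] {k m : ℕ} (hlen : ∀ P : TPath lab, P.len ≤ k)
    {C : Fin m → TPath lab} (hC : IsTPC lab C) : Fintype.card V ≤ m * (k + 1) := by
  classical
  have hcover : (Finset.univ : Finset V) ⊆
      Finset.univ.biUnion fun i => Finset.univ.image (C i).verts := by
    intro v _
    obtain ⟨i, j, hj⟩ := hC v
    exact Finset.mem_biUnion.mpr
      ⟨i, Finset.mem_univ _, Finset.mem_image.mpr ⟨j, Finset.mem_univ _, hj⟩⟩
  calc Fintype.card V = (Finset.univ : Finset V).card := Finset.card_univ.symm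
    _ ≤ _ := Finset.card_le_card hcover
    _ ≤ ∑ i, (Finset.univ.image (C i).verts).card := Finset.card_biUnion_le
    _ ≤ ∑ _i : Fin m, (k + 1) := Finset.sum_le_sum fun i _ =>
        (C i).card_image_verts_le.trans (Nat.succ_le_succ (hlen (C i)))
    _ = m * (k + 1) := by simp

end General

-- Vertex `j : Fin n` is `u_{j+1}`, so `n - j` is the label `n - (j + 1) + 1` of arcs into it.
def transTournamentLab (n : ℕ) : Fin n → Fin n → Finset ℕ :=
  fun i j => if i < j then {n - j.val} else ∅

namespace TransTournament

variable {n : ℕ}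

lemma mem_lab_iff {i j : Fin n} {t : ℕ} :
    t ∈ transTournamentLab n i j ↔ i < j ∧ t = n - j.val := by
  unfold transTournamentLab
  split_ifs <;> simp [*]

lemma lt_of_nonempty_lab {i j : Fin n} (h : (transTournamentLab n i j).Nonempty) : i < j :=
  let ⟨_, ht⟩ := h; (mem_lab_iff.mp ht).1

lemma len_le_one (P : TPath (transTournamentLab n)) : P.len ≤ 1 := by
  by_contra! h
  have h0 : 0 < P.len := by omega
  obtain ⟨huv, hv⟩ := mem_lab_iff.mp (P.mem_lab ⟨0, h0⟩)
  obtain ⟨hvw, hw⟩ := mem_lab_iff.mp (P.mem_lab ⟨1, h⟩)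
  have htimes := P.mono (show (⟨0, h0⟩ : Fin P.len) < ⟨1, h⟩ from Nat.zero_lt_one)
  have hwn := (P.verts (Fin.succ ⟨1, h⟩)).isLt
  simp only [Fin.lt_def, Fin.succ_mk, Fin.castSucc_mk, zero_add, Nat.reduceAdd]
    at huv hvw hv hw htimes hwn
  omega

lemma tempConnected {i j : Fin n} (hij : i ≠ j) : TempConnected (transTournamentLab n) i j := by
  rcases hij.lt_or_gt with hlt | hlt
  · exact tempConnected_of_mem_lab hij (mem_lab_iff.mpr ⟨hlt, rfl⟩)
  · exact (tempConnected_of_mem_lab hij.symm (mem_lab_iff.mpr ⟨hlt, rfl⟩)).symm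

def coverPath (i : Fin ((n + 1) / 2)) : TPath (transTournamentLab n) :=
  if h : 2 * i.val + 1 < n then
    .arc (u := ⟨2 * i.val, by omega⟩) (v := ⟨2 * i.val + 1, h⟩)
      (by simp [Fin.ext_iff]) (mem_lab_iff.mpr ⟨by simp [Fin.lt_def], rfl⟩)
  else
    .single ⟨2 * i.val, by omega⟩

lemma mem_vertexSet_coverPath_iff {i : Fin ((n + 1) / 2)} {v : Fin n} :
    v ∈ (coverPath i).vertexSet ↔ v.val / 2 = i.val := by
  unfold coverPath
  split_ifs with h
  · simp only [TPath.vertexSet_arc, Set.mem_insert_iff, Set.mem_singleton_iff, Fin.ext_iff]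
    omega
  · simp only [TPath.vertexSet_single, Set.mem_singleton_iff, Fin.ext_iff]
    omega

lemma coverPath_isTPC : IsTPC (transTournamentLab n) coverPath := fun v =>
  ⟨⟨v.val / 2, by omega⟩, mem_vertexSet_coverPath_iff.mpr rfl⟩

lemma coverPath_tDisjoint {i j : Fin ((n + 1) / 2)} (hij : i ≠ j) :
    TDisjoint (coverPath i) (coverPath j) :=
  TPath.tDisjoint_of_disjoint <| Set.disjoint_left.mpr fun _ hi hj =>
    hij <| Fin.ext <| (mem_vertexSet_coverPath_iff.mp hi).symm.trans
      (mem_vertexSet_coverPath_iff.mp hj)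

lemma le_of_isTPC {m : ℕ} {C : Fin m → TPath (transTournamentLab n)}
    (hC : IsTPC (transTournamentLab n) C) : (n + 1) / 2 ≤ m := by
  have := card_le_mul_of_isTPC len_le_one hC
  rw [Fintype.card_fin] at this
  omega

end TransTournament

open TransTournament in
/-- The labeled transitive tournament 𝒯ₙ: its underlying digraph is acyclic (it is a
temporal DAG), its maximum temporal antichain has size 1, and its minimum temporal path
cover and minimum temporally disjoint path cover both have size ⌈n/2⌉. In particular
temporal DAGs satisfy neither the Dilworth nor the TD-Dilworth property, and the ratio
between minimum cover size and maximum antichain size is unbounded. -/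
theorem transitive_tournament_example (n : ℕ) (hn : 2 ≤ n)
    (lab : Fin n → Fin n → Finset ℕ)
    (hlab : lab = fun i j => if i < j then {n - j.val} else ∅) :
    (∀ v : Fin n, ¬ Relation.TransGen (fun a b => (lab a b).Nonempty) v v) ∧
    IsGreatest (antichainSizes lab) 1 ∧
    IsLeast (tpcSizes lab) ((n + 1) / 2) ∧
    IsLeast (tdpcSizes lab) ((n + 1) / 2) := by
  obtain rfl : lab = transTournamentLab n := hlab
  have : Nonempty (Fin n) := ⟨⟨0, by omega⟩⟩
  exact ⟨not_transGen_self_of_arcs_lt fun _ _ => lt_of_nonempty_lab,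
    isGreatest_antichainSizes_one fun _ _ => tempConnected,
    ⟨⟨coverPath, coverPath_isTPC⟩, fun _ ⟨_, hC⟩ => le_of_isTPC hC⟩,
    ⟨⟨coverPath, coverPath_isTPC, fun _ _ => coverPath_tDisjoint⟩,
      fun _ ⟨_, hC, _⟩ => le_of_isTPC hC⟩⟩
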